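/- Let (M_k)_{k≥0} be a nonnegative stochastic process adapted to a filtration (F_k) with E[M_{k+1} | F_k] ≤ M_k + β for a constant β ≥ 0, and M_0 ≤ γ almost surely. Then for any horizon H ∈ ℕ, P( max_{0 ≤ k ≤ H} M_k ≥ 1 ) ≤ γ + βH. -/

import Mathlib

/-!
On `0 ≤ k ≤ H` the process `X k = M k + β (H - k)` dominates `M`, is nonnegative, and is a
supermartingale because the drift `β` is compensated. Stopping `X` when it first reaches `1`
(or at time `H`) and applying optional stopping gives the finite-horizon Ville inequality
`P(max_{k ≤ H} X k ≥ 1) ≤ E[X 0] ≤ γ + β H`.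
-/

namespace MeasureTheory

variable {Ω : Type*} {m0 : MeasurableSpace Ω} {μ : Measure Ω} {ℱ : Filtration ℕ m0}

theorem Supermartingale.expected_stoppedValue_le [SigmaFiniteFiltration μ ℱ]
    {X : ℕ → Ω → ℝ} (hX : Supermartingale X ℱ μ) {τ : Ω → ℕ∞} (hτ : IsStoppingTime ℱ τ) {N : ℕ}
    (hbdd : ∀ ω, τ ω ≤ N) : ∫ ω, stoppedValue X τ ω ∂μ ≤ ∫ ω, X 0 ω ∂μ := by
  have := hX.neg.expected_stoppedValue_mono (isStoppingTime_const ℱ 0) hτ (fun _ => bot_le) hbdd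
  simpa [stoppedValue, integral_neg] using this

theorem Supermartingale.maximal_ineq [IsFiniteMeasure μ] {X : ℕ → Ω → ℝ}
    (hX : Supermartingale X ℱ μ) {n : ℕ} (hnonneg : ∀ k ≤ n, ∀ ω, 0 ≤ X k ω) (ε : ℝ) :
    ε * μ.real {ω | ∃ k ≤ n, ε ≤ X k ω} ≤ ∫ ω, X 0 ω ∂μ := by
  set A := {ω | ∃ k ≤ n, ε ≤ X k ω}
  set τ : Ω → ℕ∞ := fun ω => (hittingBtwn X {y | ε ≤ y} 0 n ω : ℕ)
  have hτ : IsStoppingTime ℱ τ :=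
    hX.stronglyAdapted.adapted.isStoppingTime_hittingBtwn measurableSet_Ici
  have hτ_le : ∀ ω, τ ω ≤ n := fun ω => ENat.natCast_le_natCast.mpr (hittingBtwn_le ω)
  have hXτ_nonneg : ∀ ω, 0 ≤ stoppedValue X τ ω := fun ω => hnonneg _ (hittingBtwn_le ω) ω
  have hXτ_ge : ∀ ω ∈ A, ε ≤ stoppedValue X τ ω := fun ω ⟨k, hk, hεk⟩ =>
    stoppedValue_hittingBtwn_mem ⟨k, ⟨Nat.zero_le k, hk⟩, hεk⟩
  have hA : MeasurableSet A := by
    have hXk k : Measurable (X k) := (hX.stronglyMeasurable k).measurable.mono (ℱ.le k) le_rfl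
    measurability
  have hint : Integrable (stoppedValue X τ) μ := integrable_stoppedValue ℕ hτ hX.integrable hτ_le
  calc ε * μ.real A ≤ ∫ ω in A, stoppedValue X τ ω ∂μ :=
        setIntegral_ge_of_const_le_real hA (measure_ne_top μ A) hXτ_ge hint.integrableOn
    _ ≤ ∫ ω, stoppedValue X τ ω ∂μ := setIntegral_le_integral hint (.of_forall hXτ_nonneg)
    _ ≤ ∫ ω, X 0 ω ∂μ := hX.expected_stoppedValue_le hτ hτ_le

theorem supermartingale_sub_mul_of_condExp_succ_le [IsFiniteMeasure μ] {M : ℕ → Ω → ℝ}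
    (hadapted : Adapted ℱ M) (hint : ∀ k, Integrable (M k) μ) {β : ℝ}
    (hcond : ∀ k, μ[M (k + 1) | ℱ k] ≤ᵐ[μ] fun ω => M k ω + β) :
    Supermartingale (fun k ω => M k ω - β * k) ℱ μ := by
  refine supermartingale_nat (Adapted.stronglyAdapted fun k => (hadapted k).sub_const _)
    (fun k => (hint k).sub (integrable_const _)) fun k => ?_
  filter_upwards [condExp_sub (hint (k + 1)) (integrable_const (β * ↑(k + 1))) (ℱ k), hcond k]
    with ω hsub hle
  change μ[M (k + 1) - fun _ => β * ↑(k + 1) | ℱ k] ω ≤ _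
  rw [hsub, condExp_const (ℱ.le k), Pi.sub_apply]
  push_cast
  linarith

end MeasureTheory

open MeasureTheory

theorem c_martingale_inequality_general
    {Ω : Type*} {m0 : MeasurableSpace Ω} (P : Measure Ω) [IsProbabilityMeasure P]
    (ℱ : Filtration ℕ m0) (M : ℕ → Ω → ℝ)
    (hadapted : Adapted ℱ M)
    (hint : ∀ k, Integrable (M k) P)
    (hnonneg : ∀ k ω, 0 ≤ M k ω)
    (β γ : ℝ) (hβ : 0 ≤ β)
    (hcond : ∀ k, P[M (k + 1) | ℱ k] ≤ᵐ[P] fun ω => M k ω + β)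
    (hM0 : ∀ᵐ ω ∂P, M 0 ω ≤ γ)
    (H : ℕ) :
    P {ω | ∃ k ≤ H, 1 ≤ M k ω} ≤ ENNReal.ofReal (γ + β * H) := by
  set X : ℕ → Ω → ℝ := (fun k ω => M k ω - β * k) + fun _ _ => β * H
  have hX : Supermartingale X ℱ P :=
    (supermartingale_sub_mul_of_condExp_succ_le hadapted hint hcond).add_martingale
      (martingale_const ℱ P _)
  have hM_le_X : ∀ k ≤ H, ∀ ω, M k ω ≤ X k ω := fun k hk ω => by
    have : β * k ≤ β * H := mul_le_mul_of_nonneg_left (mod_cast hk) hβ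
    simp only [X, Pi.add_apply]
    linarith
  have hX0 : ∫ ω, X 0 ω ∂P ≤ γ + β * H :=
    calc ∫ ω, X 0 ω ∂P ≤ ∫ _, γ + β * H ∂P :=
          integral_mono_ae (hX.integrable 0) (integrable_const _) <| by
            filter_upwards [hM0] with ω hω
            simpa [X] using hω
      _ = γ + β * H := by simp
  have hmax := hX.maximal_ineq (fun k hk ω => (hnonneg k ω).trans (hM_le_X k hk ω)) 1
  rw [one_mul] at hmax
  have hsubset : {ω | ∃ k ≤ H, 1 ≤ M k ω} ⊆ {ω | ∃ k ≤ H, 1 ≤ X k ω} :=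
    fun ω ⟨k, hk, h1k⟩ => ⟨k, hk, h1k.trans (hM_le_X k hk ω)⟩
  rw [← ofReal_measureReal]
  exact ENNReal.ofReal_le_ofReal ((measureReal_mono hsubset).trans (hmax.trans hX0))

/-- Nonnegative c-martingale (β-martingale) inequality of Kushner: if `(M_k)` is a
nonnegative adapted process with `E[M_{k+1} | F_k] ≤ M_k + β` and `M_0 ≤ γ` a.s., then
`P(max_{0≤k≤H} M_k ≥ 1) ≤ γ + βH`. -/
theorem c_martingale_inequality
    {Ω : Type*} {m0 : MeasurableSpace Ω} (P : Measure Ω) [IsProbabilityMeasure P]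
    (ℱ : Filtration ℕ m0) (M : ℕ → Ω → ℝ)
    (hadapted : Adapted ℱ M)
    (hint : ∀ k, Integrable (M k) P)
    (hnonneg : ∀ k ω, 0 ≤ M k ω)
    (β γ : ℝ) (hβ : 0 ≤ β) (hγ : 0 ≤ γ)
    (hcond : ∀ k, P[M (k + 1) | ℱ k] ≤ᵐ[P] fun ω => M k ω + β)
    (hM0 : ∀ᵐ ω ∂P, M 0 ω ≤ γ)
    (H : ℕ) :
    P {ω | ∃ k ≤ H, 1 ≤ M k ω} ≤ ENNReal.ofReal (γ + β * H) :=
  c_martingale_inequality_general P ℱ M hadapted hint hnonneg β γ hβ hcond hM0 H
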